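/- Fix γ ∈ ℂ and let A_γ be the type (iii) algebra with parameter γ. Then b = −a is a generator of A_γ (i.e. {b, b², b³} is a basis) and b·b³ = b² − γb³. -/

import Mathlib

/-- `lpow μ x k` is the left-normed power `x^(k+1)`; so `lpow μ x 0 = x`,
`lpow μ x 1 = x·x = x²`, `lpow μ x 2 = x·x² = x³`, etc. -/
def lpow {A : Type*} [AddCommGroup A] [Module ℂ A]
    (μ : A →ₗ[ℂ] A →ₗ[ℂ] A) (x : A) : ℕ → A
  | 0 => x
  | n + 1 => μ x (lpow μ x n)
/-- The 3-dimensional cyclic Leibniz algebra of type (iii) with parameter γ: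
A_γ = ℂ³ with basis a = e₀, a² = e₁, a³ = e₂ and multiplication u·v = u₀ • L_a(v),
where L_a(a) = a², L_a(a²) = a³, L_a(a³) = a² + γa³ (so a²·v = a³·v = 0). -/
noncomputable def mulIII (γ : ℂ) : (Fin 3 → ℂ) →ₗ[ℂ] (Fin 3 → ℂ) →ₗ[ℂ] (Fin 3 → ℂ) :=
  (LinearMap.proj 0).smulRight (Matrix.mulVecLin !![0,0,0;1,0,1;0,1,γ])

noncomputable def a : Fin 3 → ℂ := ![1,0,0]
noncomputable def a2 : Fin 3 → ℂ := ![0,1,0]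
noncomputable def a3 : Fin 3 → ℂ := ![0,0,1]

/-! By bilinearity `(c•x)^k = c^k • x^k`, so the powers of `b = -a` are `-a, a², -a³`, again a
basis, and `b·b³ = a·a³ = a² + γa³ = b² - γb³`. -/

section LeftPowers

variable {A : Type*} [AddCommGroup A] [Module ℂ A] (μ : A →ₗ[ℂ] A →ₗ[ℂ] A)

theorem lpow_smul (c : ℂ) (x : A) (n : ℕ) : lpow μ (c • x) n = c ^ (n + 1) • lpow μ x n := by
  induction n with
  | zero => simp [lpow]
  | succ n ih => rw [lpow, ih, LinearMap.map_smul₂, map_smul, smul_smul, ← pow_succ', lpow]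

theorem lpow_neg (x : A) (n : ℕ) : lpow μ (-x) n = (-1 : ℂ) ^ (n + 1) • lpow μ x n := by
  rw [← lpow_smul, neg_one_smul]

theorem exists_basis_lpow_neg {n : ℕ} {x : A} (e : Module.Basis (Fin n) ℂ A)
    (he : ∀ i : Fin n, e i = lpow μ x i) :
    ∃ e' : Module.Basis (Fin n) ℂ A, ∀ i : Fin n, e' i = lpow μ (-x) i :=
  ⟨e.unitsSMul fun i => (-1) ^ ((i : ℕ) + 1), fun i => by
    simp [Module.Basis.unitsSMul_apply, he, lpow_neg, Units.smul_def]⟩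

end LeftPowers

section TypeIII

variable (γ : ℂ)

theorem mulIII_a_a : mulIII γ a a = a2 := by
  ext i; fin_cases i <;> simp [mulIII, a, a2, Matrix.mulVec, dotProduct, Fin.sum_univ_three]

theorem mulIII_a_a2 : mulIII γ a a2 = a3 := by
  ext i; fin_cases i <;> simp [mulIII, a, a2, a3, Matrix.mulVec, dotProduct, Fin.sum_univ_three]

theorem mulIII_a_a3 : mulIII γ a a3 = a2 + γ • a3 := by
  ext i; fin_cases i <;> simp [mulIII, a, a2, a3, Matrix.mulVec, dotProduct, Fin.sum_univ_three]

theorem lpow_mulIII_a_one : lpow (mulIII γ) a 1 = a2 := mulIII_a_a γ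

theorem lpow_mulIII_a_two : lpow (mulIII γ) a 2 = a3 := by
  rw [lpow, lpow_mulIII_a_one, mulIII_a_a2]

theorem pi_basisFun_eq_lpow_mulIII_a (i : Fin 3) :
    Pi.basisFun ℂ (Fin 3) i = lpow (mulIII γ) a i := by
  fin_cases i
  · ext j; fin_cases j <;> simp [lpow, a]
  · show _ = lpow (mulIII γ) a 1
    rw [lpow_mulIII_a_one]; ext j; fin_cases j <;> simp [a2]
  · show _ = lpow (mulIII γ) a 2
    rw [lpow_mulIII_a_two]; ext j; fin_cases j <;> simp [a3]

end TypeIII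

/-- In the type (iii) algebra A_γ, b = −a is a generator of A_γ
(i.e. {b, b², b³} is a basis) and b·b³ = b² − γb³. -/
theorem typeIII_neg_generator (γ : ℂ) :
    (∃ e : Module.Basis (Fin 3) ℂ (Fin 3 → ℂ),
        ∀ i : Fin 3, e i = lpow (mulIII γ) (-a) (i : ℕ)) ∧
    mulIII γ (-a) (lpow (mulIII γ) (-a) 2) =
      lpow (mulIII γ) (-a) 1 - γ • lpow (mulIII γ) (-a) 2 := by
  refine ⟨exists_basis_lpow_neg _ _ (pi_basisFun_eq_lpow_mulIII_a γ), ?_⟩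
  simp only [lpow_neg, lpow_mulIII_a_one, lpow_mulIII_a_two, LinearMap.map_neg₂, map_smul,
    mulIII_a_a3]
  module
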